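/- arXiv:2309.01284 — 9 statements merged into one kernel-verified Lean document; each statement's English description precedes it below -/
import Mathlib

section
/- In any flexible involutive meadow, for all elements x, y, z: x + y = x + z if and only if N(x) + y = N(x) + z. -/
theorem stmt0 (M : Type*) (add mul : M → M → M) (neg inv N : M → M) (one : M)
    (FI1 : ∀ x y z : M, add (add x y) z = add x (add y z))
    (FI2 : ∀ x y : M, add x y = add y x)
    (FI3 : ∀ x : M, add x (N x) = x)
    (FI4 : ∀ x : M, add x (neg x) = N x)
    (FI5 : ∀ x y z : M, mul (mul x y) z = mul x (mul y z))
    (FI6 : ∀ x y : M, mul x y = mul y x)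
    (FI7 : ∀ x : M, mul (add one (mul (N x) (inv x))) x = x)
    (FI8 : ∀ x y z : M, mul x (add y z) =
      add (add (add (mul x y) (mul x z)) (mul (N x) y)) (mul (N x) z))
    (FI9 : ∀ x : M, inv (inv x) = x)
    (FI10 : ∀ x : M, mul x (mul x (inv x)) = x) :
    ∀ x y z : M, add x y = add x z ↔ add (N x) y = add (N x) z := by
  intro x y z
  constructor
  · intro h
    have : add (neg x) (add x y) = add (neg x) (add x z) := by rw [h]
    rwa [← FI1, ← FI1, FI2 (neg x) x, FI4] at this
  · intro h
    have : add x (add (N x) y) = add x (add (N x) z) := by rw [h]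
    rwa [← FI1, ← FI1, FI3] at this
end

section
/- In any flexible involutive meadow additionally satisfying (N1): for all x, y, N(x+y) = N(x) or N(x+y) = N(y), and (N2): N(-x) = N(x), one has N(x+y) = N(x) + N(y) for all x, y. -/
theorem stmt2 (M : Type*) (add mul : M → M → M) (neg inv N : M → M) (one : M)
    (FI1 : ∀ x y z : M, add (add x y) z = add x (add y z))
    (FI2 : ∀ x y : M, add x y = add y x)
    (FI3 : ∀ x : M, add x (N x) = x)
    (FI4 : ∀ x : M, add x (neg x) = N x)
    (FI5 : ∀ x y z : M, mul (mul x y) z = mul x (mul y z))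
    (FI6 : ∀ x y : M, mul x y = mul y x)
    (FI7 : ∀ x : M, mul (add one (mul (N x) (inv x))) x = x)
    (FI8 : ∀ x y z : M, mul x (add y z) =
      add (add (add (mul x y) (mul x z)) (mul (N x) y)) (mul (N x) z))
    (FI9 : ∀ x : M, inv (inv x) = x)
    (FI10 : ∀ x : M, mul x (mul x (inv x)) = x)
    (N1 : ∀ x y : M, N (add x y) = N x ∨ N (add x y) = N y)
    (N2 : ∀ x : M, N (neg x) = N x) :
    ∀ x y : M, N (add x y) = add (N x) (N y) := by
  have comm4 : ∀ a b c d : M, add (add a b) (add c d) = add (add a c) (add b d) := by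
    intro a b c d
    rw [FI1, ← FI1 b, FI2 b c, FI1, ← FI1]
  have absorb : ∀ a s : M, add a s = a → add (N a) s = N a := by
    intro a s h
    have h2 : add (N a) s = add (add a s) (neg a) := by
      rw [← FI4, FI1, FI2 (neg a) s, ← FI1]
    rw [h2, h, FI4]
  have idem : ∀ a : M, add (N a) (N a) = N a := fun a => absorb a (N a) (FI3 a)
  intro x y
  have hstab : add (add x y) (add (N x) (N y)) = add x y := by
    rw [comm4, FI3, FI3]
  have key := absorb (add x y) (add (N x) (N y)) hstab
  rcases N1 x y with h | h
  · rw [h] at key ⊢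
    rw [← FI1, idem] at key
    exact key.symm
  · rw [h] at key ⊢
    rw [FI2 (N x) (N y), ← FI1, idem] at key
    rw [FI2 (N x) (N y)]
    exact key.symm
end

section
/- In any flexible involutive meadow satisfying axioms (N1) and (N2), for every element x, N(N(x)) = N(x). -/
theorem stmt3 (M : Type*) (add mul : M → M → M) (neg inv N : M → M) (one : M)
    (FI1 : ∀ x y z : M, add (add x y) z = add x (add y z))
    (FI2 : ∀ x y : M, add x y = add y x)
    (FI3 : ∀ x : M, add x (N x) = x)
    (FI4 : ∀ x : M, add x (neg x) = N x)
    (FI5 : ∀ x y z : M, mul (mul x y) z = mul x (mul y z))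
    (FI6 : ∀ x y : M, mul x y = mul y x)
    (FI7 : ∀ x : M, mul (add one (mul (N x) (inv x))) x = x)
    (FI8 : ∀ x y z : M, mul x (add y z) =
      add (add (add (mul x y) (mul x z)) (mul (N x) y)) (mul (N x) z))
    (FI9 : ∀ x : M, inv (inv x) = x)
    (FI10 : ∀ x : M, mul x (mul x (inv x)) = x)
    (N1 : ∀ x y : M, N (add x y) = N x ∨ N (add x y) = N y)
    (N2 : ∀ x : M, N (neg x) = N x) :
    ∀ x : M, N (N x) = N x := by
  intro x
  conv_lhs => rw [← FI4 x]
  rcases N1 x (neg x) with h | h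
  · exact h
  · rw [h, N2]
end

section
/- In any flexible involutive meadow satisfying axioms (N1) and (N2), if x = N(y) for some y, then x = N(x). -/
theorem stmt4 (M : Type*) (add mul : M → M → M) (neg inv N : M → M) (one : M)
    (FI1 : ∀ x y z : M, add (add x y) z = add x (add y z))
    (FI2 : ∀ x y : M, add x y = add y x)
    (FI3 : ∀ x : M, add x (N x) = x)
    (FI4 : ∀ x : M, add x (neg x) = N x)
    (FI5 : ∀ x y z : M, mul (mul x y) z = mul x (mul y z))
    (FI6 : ∀ x y : M, mul x y = mul y x)
    (FI7 : ∀ x : M, mul (add one (mul (N x) (inv x))) x = x)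
    (FI8 : ∀ x y z : M, mul x (add y z) =
      add (add (add (mul x y) (mul x z)) (mul (N x) y)) (mul (N x) z))
    (FI9 : ∀ x : M, inv (inv x) = x)
    (FI10 : ∀ x : M, mul x (mul x (inv x)) = x)
    (N1 : ∀ x y : M, N (add x y) = N x ∨ N (add x y) = N y)
    (N2 : ∀ x : M, N (neg x) = N x) :
    ∀ x y : M, x = N y → x = N x := by
  intro x y h
  subst h
  rcases N1 y (neg y) with h1 | h1 <;> rw [FI4] at h1 <;> rw [h1]
  exact (N2 y).symm
end

section
/- In any flexible involutive meadow satisfying axioms (N1) and (N2), for every element x, -(-x) = x. -/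
theorem stmt5 (M : Type*) (add mul : M → M → M) (neg inv N : M → M) (one : M)
    (FI1 : ∀ x y z : M, add (add x y) z = add x (add y z))
    (FI2 : ∀ x y : M, add x y = add y x)
    (FI3 : ∀ x : M, add x (N x) = x)
    (FI4 : ∀ x : M, add x (neg x) = N x)
    (FI5 : ∀ x y z : M, mul (mul x y) z = mul x (mul y z))
    (FI6 : ∀ x y : M, mul x y = mul y x)
    (FI7 : ∀ x : M, mul (add one (mul (N x) (inv x))) x = x)
    (FI8 : ∀ x y z : M, mul x (add y z) =
      add (add (add (mul x y) (mul x z)) (mul (N x) y)) (mul (N x) z))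
    (FI9 : ∀ x : M, inv (inv x) = x)
    (FI10 : ∀ x : M, mul x (mul x (inv x)) = x)
    (N1 : ∀ x y : M, N (add x y) = N x ∨ N (add x y) = N y)
    (N2 : ∀ x : M, N (neg x) = N x) :
    ∀ x : M, neg (neg x) = x := by
  intro x
  calc neg (neg x) = add (neg (neg x)) (N (neg (neg x))) := (FI3 _).symm
    _ = add (neg (neg x)) (N x) := by rw [N2, N2]
    _ = add (N x) (neg (neg x)) := FI2 _ _
    _ = add (add x (neg x)) (neg (neg x)) := by rw [FI4]
    _ = add x (add (neg x) (neg (neg x))) := FI1 _ _ _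
    _ = add x (N x) := by rw [FI4, N2]
    _ = x := FI3 _
end

section
/- In any flexible involutive meadow satisfying axioms (N1) and (N2), for all elements x and y, -(x + y) = (-x) + (-y). -/
theorem stmt6 (M : Type*) (add mul : M → M → M) (neg inv N : M → M) (one : M)
    (FI1 : ∀ x y z : M, add (add x y) z = add x (add y z))
    (FI2 : ∀ x y : M, add x y = add y x)
    (FI3 : ∀ x : M, add x (N x) = x)
    (FI4 : ∀ x : M, add x (neg x) = N x)
    (FI5 : ∀ x y z : M, mul (mul x y) z = mul x (mul y z))
    (FI6 : ∀ x y : M, mul x y = mul y x)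
    (FI7 : ∀ x : M, mul (add one (mul (N x) (inv x))) x = x)
    (FI8 : ∀ x y z : M, mul x (add y z) =
      add (add (add (mul x y) (mul x z)) (mul (N x) y)) (mul (N x) z))
    (FI9 : ∀ x : M, inv (inv x) = x)
    (FI10 : ∀ x : M, mul x (mul x (inv x)) = x)
    (N1 : ∀ x y : M, N (add x y) = N x ∨ N (add x y) = N y)
    (N2 : ∀ x : M, N (neg x) = N x) :
    ∀ x y : M, neg (add x y) = add (neg x) (neg y) := by
  haveI : Std.Associative add := ⟨FI1⟩
  haveI : Std.Commutative add := ⟨FI2⟩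
  intro x y
  set u := add x y with hu
  set b := add (neg x) (neg y) with hb
  have hx' : add (neg x) (N x) = neg x := by rw [← N2 x, FI3]
  have hy' : add (neg y) (N y) = neg y := by rw [← N2 y, FI3]
  have hNu_a : add (N u) (neg u) = neg u := by rw [FI2, ← N2 u, FI3]
  have hub : add u b = add (N x) (N y) := by
    have h : add (add x y) (add (neg x) (neg y))
        = add (add x (neg x)) (add y (neg y)) := by ac_rfl
    rw [hu, hb, h, FI4, FI4]
  have hNxy_u : add (add (N x) (N y)) u = u := by
    have h : add (add (N x) (N y)) (add x y)
        = add (add x (N x)) (add y (N y)) := by ac_rfl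
    rw [hu, h, FI3, FI3]
  have h1 : add (add (neg u) u) (neg u) = neg u := by
    rw [FI2 (neg u) u, FI4, hNu_a]
  have h2 : add (add u b) u = u := by rw [hub, hNxy_u]
  have key : neg u = add (N u) b := by
    calc neg u = add (add (neg u) u) (neg u) := h1.symm
      _ = add (add (neg u) (add (add u b) u)) (neg u) := by rw [h2]
      _ = add (add (add (add (neg u) u) (neg u)) u) b := by ac_rfl
      _ = add (add (neg u) u) b := by rw [h1]
      _ = add (N u) b := by rw [FI2 (neg u) u, FI4]
  have hbx : add (N x) b = b := by
    have h : add (N x) (add (neg x) (neg y))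
        = add (add (neg x) (N x)) (neg y) := by ac_rfl
    rw [hb, h, hx']
  have hby : add (N y) b = b := by
    have h : add (N y) (add (neg x) (neg y))
        = add (neg x) (add (neg y) (N y)) := by ac_rfl
    rw [hb, h, hy']
  rcases N1 x y with h | h
  · rw [← hu] at h; rw [key, h, hbx]
  · rw [← hu] at h; rw [key, h, hby]
end

section
/- In any flexible involutive meadow satisfying axioms (N1) and (N2), for every element x, N(x) = -N(x). -/
theorem stmt7 (M : Type*) (add mul : M → M → M) (neg inv N : M → M) (one : M)
    (FI1 : ∀ x y z : M, add (add x y) z = add x (add y z))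
    (FI2 : ∀ x y : M, add x y = add y x)
    (FI3 : ∀ x : M, add x (N x) = x)
    (FI4 : ∀ x : M, add x (neg x) = N x)
    (FI5 : ∀ x y z : M, mul (mul x y) z = mul x (mul y z))
    (FI6 : ∀ x y : M, mul x y = mul y x)
    (FI7 : ∀ x : M, mul (add one (mul (N x) (inv x))) x = x)
    (FI8 : ∀ x y z : M, mul x (add y z) =
      add (add (add (mul x y) (mul x z)) (mul (N x) y)) (mul (N x) z))
    (FI9 : ∀ x : M, inv (inv x) = x)
    (FI10 : ∀ x : M, mul x (mul x (inv x)) = x)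
    (N1 : ∀ x y : M, N (add x y) = N x ∨ N (add x y) = N y)
    (N2 : ∀ x : M, N (neg x) = N x) :
    ∀ x : M, N x = neg (N x) := by
  intro x
  have hNN : N (N x) = N x := by
    have h := N1 x (neg x)
    rw [FI4] at h
    rcases h with h | h
    · exact h
    · rw [N2] at h; exact h
  have h1 : add (N x) (neg (N x)) = N x := by rw [FI4, hNN]
  have h2 : add (neg (N x)) (N (neg (N x))) = neg (N x) := FI3 _
  rw [N2, hNN, FI2] at h2
  rw [h1] at h2
  exact h2
end

section
/- Let F be an ordered field, let I ⊆ F be a convex additive subgroup that is multiplicatively idempotent (I·I = I, where I·I is the set of products), and let r, s ∈ F with 0 < r < s. If the sets rI = {r·i : i ∈ I} and sI are equal, then the sets r⁻¹I and s⁻¹I are equal. -/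
open Pointwise

theorem Set.inv_smul_set_eq_of_smul_set_eq {K α : Type*} [CommGroupWithZero K] [MulAction K α]
    {a b : K} (ha : a ≠ 0) (hb : b ≠ 0) {A : Set α} (h : a • A = b • A) :
    a⁻¹ • A = b⁻¹ • A :=
  calc a⁻¹ • A = ((a * b)⁻¹ * b) • A := by rw [mul_inv, inv_mul_cancel_right₀ hb]
    _ = (a * b)⁻¹ • b • A := smul_smul _ _ _ |>.symm
    _ = (a * b)⁻¹ • a • A := by rw [h]
    _ = b⁻¹ • A := by rw [smul_smul, mul_comm a, mul_inv, inv_mul_cancel_right₀ ha]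

theorem stmt9_general (F : Type*) [Field F] [LinearOrder F] (I : AddSubgroup F)
    (r s : F) (hr : 0 < r) (hrs : r < s)
    (h : r • (I : Set F) = s • (I : Set F)) :
    r⁻¹ • (I : Set F) = s⁻¹ • (I : Set F) :=
  Set.inv_smul_set_eq_of_smul_set_eq hr.ne' (hr.trans hrs).ne' h

theorem stmt9 (F : Type*) [Field F] [LinearOrder F] [IsStrictOrderedRing F] (I : AddSubgroup F)
    (hconv : ∀ x ∈ I, ∀ y ∈ I, ∀ z : F, x ≤ z → z ≤ y → z ∈ I)
    (hidem : (I : Set F) * (I : Set F) = (I : Set F))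
    (r s : F) (hr : 0 < r) (hrs : r < s)
    (h : r • (I : Set F) = s • (I : Set F)) :
    r⁻¹ • (I : Set F) = s⁻¹ • (I : Set F) :=
  stmt9_general F I r s hr hrs h
end

section
/- Consider the structure M whose elements are either ⊥ (an error element) or elements r of a field F, with operations: r + s and r·s as in F; r + ⊥ = ⊥ + r = ⊥ + ⊥ = ⊥; r·⊥ = ⊥·r = ⊥·⊥ = ⊥; -⊥ = ⊥; inverse r⁻¹ as in F for r ≠ 0, 0⁻¹ = ⊥, ⊥⁻¹ = ⊥. Then M satisfies the common meadow axioms (M1)–(M14). -/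
def oAdd {F : Type*} [Field F] : Option F → Option F → Option F
  | some a, some b => some (a + b)
  | _, _ => none

def oMul {F : Type*} [Field F] : Option F → Option F → Option F
  | some a, some b => some (a * b)
  | _, _ => none

def oNeg {F : Type*} [Field F] : Option F → Option F
  | some a => some (-a)
  | none => none

open Classical in
noncomputable def oInv {F : Type*} [Field F] : Option F → Option F
  | some a => if a = 0 then none else some a⁻¹
  | none => none

theorem stmt15 (F : Type*) [Field F] :
    (∀ x y z : Option F, oAdd (oAdd x y) z = oAdd x (oAdd y z)) ∧
    (∀ x y : Option F, oAdd x y = oAdd y x) ∧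
    (∀ x : Option F, oAdd x (some 0) = x) ∧
    (∀ x : Option F, oAdd x (oNeg x) = oMul (some 0) x) ∧
    (∀ x y z : Option F, oMul (oMul x y) z = oMul x (oMul y z)) ∧
    (∀ x y : Option F, oMul x y = oMul y x) ∧
    (∀ x : Option F, oMul (some 1) x = x) ∧
    (∀ x y z : Option F, oMul x (oAdd y z) = oAdd (oMul x y) (oMul x z)) ∧
    (∀ x : Option F, oNeg (oNeg x) = x) ∧
    (∀ x : Option F, oMul x (oInv x) = oAdd (some 1) (oMul (some 0) (oInv x))) ∧
    (∀ x y : Option F, oInv (oMul x y) = oMul (oInv x) (oInv y)) ∧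
    (∀ x : Option F, oInv (oAdd (some 1) (oMul (some 0) x)) =
      oAdd (some 1) (oMul (some 0) x)) ∧
    (oInv (some (0 : F)) = none) ∧
    (∀ x : Option F, oAdd x none = none) := by
  refine ⟨?_, ?_, ?_, ?_, ?_, ?_, ?_, ?_, ?_, ?_, ?_, ?_, ?_, ?_⟩
  · rintro (_|a) (_|b) (_|c) <;> simp [oAdd, add_assoc]
  · rintro (_|a) (_|b) <;> simp [oAdd, add_comm]
  · rintro (_|a) <;> simp [oAdd]
  · rintro (_|a) <;> simp [oAdd, oNeg, oMul]
  · rintro (_|a) (_|b) (_|c) <;> simp [oMul, mul_assoc]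
  · rintro (_|a) (_|b) <;> simp [oMul, mul_comm]
  · rintro (_|a) <;> simp [oMul]
  · rintro (_|a) (_|b) (_|c) <;> simp [oMul, oAdd, mul_add]
  · rintro (_|a) <;> simp [oNeg]
  · rintro (_|a)
    · simp [oMul, oInv, oAdd]
    · by_cases h : a = 0 <;> simp [oMul, oInv, oAdd, h, mul_inv_cancel₀]
  · rintro (_|a) (_|b)
    · simp [oMul, oInv]
    · simp [oMul, oInv]
    · by_cases ha : a = 0 <;> simp [oMul, oInv, ha]
    · by_cases ha : a = 0 <;> by_cases hb : b = 0 <;>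
        simp [oMul, oInv, ha, hb, mul_inv, mul_comm]
  · rintro (_|a) <;> simp [oAdd, oMul, oInv]
  · simp [oInv]
  · rintro (_|a) <;> simp [oAdd]
end
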